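/- arXiv:2503.17466 — 3 statements merged into one kernel-verified Lean document; each statement's English description precedes it below -/
import Mathlib

section
/- Let n ≥ 1, m ∈ ℝ, r ≥ 0, and let p : ℤⁿ → ℂ be a symbol of order m. Then p(D) is GH-r if and only if the set {ξ ∈ ℤⁿ : p(ξ) = 0} is finite and there exists a constant K > 0 such that |p(ξ)| ≥ K·|ξ|^(m−r) for every ξ ∈ ℤⁿ \ {0} with p(ξ) ≠ 0. -/
/-!
Away from `0`, the weight `(1 + ‖ξ‖²)^s` is comparable to `|ξ|^(2s)`. So if `p` vanishes
only on a finite set and `|p ξ| ≥ K |ξ|^(m-r)`, dividing `p u` by `p` off that finite set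
gains the weight `(1 + ‖ξ‖²)^((m-r)/2)`, i.e. `m - r` derivatives.

Conversely, GH-`r` is tested on indicators `u = 1_S`, which have polynomial growth: if
`p · 1_S ∈ H^(r-m)` then `1_S ∈ H^0`, so `S` is finite. For `S` the zero set of `p` this is
immediate. If the lower bound failed, there would be `ξⱼ` with `p ξⱼ ≠ 0` and
`(1 + ‖ξⱼ‖²)^(r-m) |p ξⱼ|² < 2^(-j)`; they form an infinite set `S` with
`p · 1_S ∈ H^(r-m)`.
-/

open scoped BigOperators

/-- `|ξ| = Σⱼ |ξⱼ|`. -/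
noncomputable def l1norm {n : ℕ} (ξ : Fin n → ℤ) : ℝ := ∑ j, |(ξ j : ℝ)|

/-- `‖ξ‖² = Σⱼ ξⱼ²`. -/
noncomputable def l2normSq {n : ℕ} (ξ : Fin n → ℤ) : ℝ := ∑ j, ((ξ j : ℝ)) ^ 2

/-- `u ∈ H^k(𝕋ⁿ)` in terms of its Fourier coefficients. -/
def InSobolev {n : ℕ} (k : ℝ) (u : (Fin n → ℤ) → ℂ) : Prop :=
  Summable fun ξ : Fin n → ℤ => (1 + l2normSq ξ) ^ k * ‖u ξ‖ ^ 2

/-- Polynomial growth of Fourier coefficients (a distribution on `𝕋ⁿ`). -/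
def PolyGrowth {n : ℕ} (u : (Fin n → ℤ) → ℂ) : Prop :=
  ∃ C N : ℝ, 0 < C ∧ 0 < N ∧
    ∀ ξ, ‖u ξ‖ ≤ C * (1 + Real.sqrt (l2normSq ξ)) ^ N

/-- Rapidly decreasing Fourier coefficients (a smooth function on `𝕋ⁿ`). -/
def RapidDecay {n : ℕ} (v : (Fin n → ℤ) → ℂ) : Prop :=
  ∀ N : ℝ, 0 < N → ∃ C : ℝ, 0 < C ∧
    ∀ ξ, ‖v ξ‖ ≤ C * (1 + Real.sqrt (l2normSq ξ)) ^ (-N)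

/-- `p` is a symbol of order `m`. -/
def SymbolOrder {n : ℕ} (m : ℝ) (p : (Fin n → ℤ) → ℂ) : Prop :=
  ∃ C : ℝ, 0 < C ∧ ∀ ξ, ‖p ξ‖ ≤ C * (1 + l2normSq ξ) ^ (m / 2)

/-- `p(D)` is globally hypoelliptic with loss of `r` derivatives (GH-`r`). -/
def GHr {n : ℕ} (m r : ℝ) (p : (Fin n → ℤ) → ℂ) : Prop :=
  ∀ (k : ℝ) (u : (Fin n → ℤ) → ℂ), PolyGrowth u →
    InSobolev k (fun ξ => p ξ * u ξ) → InSobolev (k + m - r) u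

/-- `p(D)` is globally solvable with loss of `r` derivatives (GS-`r`). -/
def GSr {n : ℕ} (m r : ℝ) (p : (Fin n → ℤ) → ℂ) : Prop :=
  ∀ (k : ℝ) (f : (Fin n → ℤ) → ℂ), InSobolev k f → (∀ ξ, p ξ = 0 → f ξ = 0) →
    ∃ u : (Fin n → ℤ) → ℂ, InSobolev (k + m - r) u ∧ ∀ ξ, p ξ * u ξ = f ξ

/-- `p(D)` is globally hypoelliptic (GH). -/
def GloballyHypoelliptic {n : ℕ} (p : (Fin n → ℤ) → ℂ) : Prop :=
  ∀ u : (Fin n → ℤ) → ℂ, PolyGrowth u →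
    RapidDecay (fun ξ => p ξ * u ξ) → RapidDecay u

open Filter Set

section Norms
variable {n : ℕ}

lemma l1norm_nonneg (ξ : Fin n → ℤ) : 0 ≤ l1norm ξ :=
  Finset.sum_nonneg fun _ _ => abs_nonneg _

lemma l2normSq_nonneg (ξ : Fin n → ℤ) : 0 ≤ l2normSq ξ :=
  Finset.sum_nonneg fun _ _ => sq_nonneg _

lemma l2normSq_le_l1norm_sq (ξ : Fin n → ℤ) : l2normSq ξ ≤ l1norm ξ ^ 2 :=
  calc l2normSq ξ = ∑ j, |(ξ j : ℝ)| ^ 2 := by simp only [l2normSq, sq_abs]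
    _ ≤ l1norm ξ ^ 2 := Finset.sum_sq_le_sq_sum_of_nonneg fun _ _ => abs_nonneg _

lemma l1norm_sq_le_mul_l2normSq (ξ : Fin n → ℤ) : l1norm ξ ^ 2 ≤ n * l2normSq ξ := by
  simpa [l1norm, l2normSq, sq_abs] using
    sq_sum_le_card_mul_sum_sq (s := Finset.univ) (f := fun j => |(ξ j : ℝ)|)

lemma one_le_l2normSq {ξ : Fin n → ℤ} (hξ : ξ ≠ 0) : 1 ≤ l2normSq ξ := by
  obtain ⟨j, hj⟩ := Function.ne_iff.mp hξ
  have hj' : (1 : ℝ) ≤ (ξ j : ℝ) ^ 2 := by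
    exact_mod_cast (one_le_sq_iff_one_le_abs _).2 (Int.one_le_abs hj)
  exact hj'.trans (Finset.single_le_sum (fun i _ => sq_nonneg (ξ i : ℝ)) (Finset.mem_univ j))

lemma l1norm_pos {ξ : Fin n → ℤ} (hξ : ξ ≠ 0) : 0 < l1norm ξ :=
  lt_of_pow_lt_pow_left₀ 2 (l1norm_nonneg ξ) <| by
    linarith [one_le_l2normSq hξ, l2normSq_le_l1norm_sq ξ]

end Norms

lemma rpow_le_rpow_abs_mul_rpow_of_le_mul {a b c : ℝ} (ha : 0 < a) (hb : 0 < b)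
    (hab : a ≤ c * b) (hba : b ≤ c * a) (s : ℝ) : a ^ s ≤ c ^ |s| * b ^ s := by
  have hc : 0 < c := pos_of_mul_pos_left (ha.trans_le hab) hb.le
  rcases le_or_gt 0 s with hs | hs
  · rw [abs_of_nonneg hs, ← Real.mul_rpow hc.le hb.le]
    exact Real.rpow_le_rpow ha.le hab hs
  · rw [abs_of_neg hs, Real.rpow_neg hc.le, ← Real.inv_rpow hc.le,
      ← Real.mul_rpow (by positivity) hb.le]
    exact Real.rpow_le_rpow_of_nonpos (by positivity) ((inv_mul_le_iff₀ hc).2 hba) hs.le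

lemma exists_weight_rpow_le_mul_l1norm_rpow_sq {n : ℕ} (s : ℝ) :
    ∃ C : ℝ, 0 < C ∧ ∀ ξ : Fin n → ℤ, ξ ≠ 0 →
      (1 + l2normSq ξ) ^ s ≤ C * (l1norm ξ ^ s) ^ 2 := by
  -- for `ξ ≠ 0`: `1 + ‖ξ‖² ≤ 2 |ξ|²` and `|ξ|² ≤ n ‖ξ‖²`
  refine ⟨((n : ℝ) + 2) ^ |s|, by positivity, fun ξ hξ => ?_⟩
  have h1 := one_le_l2normSq hξ
  have h2 := l2normSq_le_l1norm_sq ξ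
  have h3 := l1norm_sq_le_mul_l2normSq ξ
  rw [Real.rpow_pow_comm (l1norm_nonneg ξ)]
  refine rpow_le_rpow_abs_mul_rpow_of_le_mul (by linarith) (pow_pos (l1norm_pos hξ) 2)
    (by nlinarith) (by nlinarith [l2normSq_nonneg ξ]) s

lemma exists_infinite_summable_indicator_of_forall_exists_lt {α : Type*} {T : Set α}
    {q : α → ℝ} (hpos : ∀ x ∈ T, 0 < q x) (hsmall : ∀ ε > 0, ∃ x ∈ T, q x < ε) :
    ∃ S ⊆ T, S.Infinite ∧ Summable (S.indicator q) := by
  choose x hxT hxq using fun j : ℕ => hsmall ((1 / 2) ^ j) (by positivity)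
  refine ⟨range x, range_subset_iff.2 hxT, fun hfin => ?_, ?_⟩
  · obtain ⟨_, ⟨j₀, rfl⟩, hmin⟩ := Set.exists_min_image _ q hfin (range_nonempty x)
    obtain ⟨j, hj⟩ := exists_pow_lt_of_lt_one (hpos _ (hxT j₀)) one_half_lt_one
    exact (hmin _ (mem_range_self j)).not_gt ((hxq j).trans hj)
  · rw [← summable_subtype_iff_indicator]
    choose idx hidx using fun y : range x => y.2
    have hinj : Function.Injective idx := fun y z h =>
      Subtype.ext (by rw [← hidx y, ← hidx z, h])
    refine summable_geometric_two.comp_injective hinj |>.of_nonneg_of_le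
      (fun y => (hpos _ (range_subset_iff.2 hxT y.2)).le) fun y => ?_
    simpa only [Function.comp_apply, hidx] using (hxq (idx y)).le

section Hypoellipticity
variable {n : ℕ} {m r : ℝ} {p : (Fin n → ℤ) → ℂ}

lemma polyGrowth_of_norm_le {u : (Fin n → ℤ) → ℂ} {C : ℝ} (h : ∀ ξ, ‖u ξ‖ ≤ C) :
    PolyGrowth u := by
  refine ⟨max C 1, 1, by positivity, one_pos, fun ξ => ?_⟩
  rw [Real.rpow_one]
  nlinarith [h ξ, le_max_left C 1, le_max_right C 1, Real.sqrt_nonneg (l2normSq ξ)]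

lemma finite_of_inSobolev_zero_indicator {S : Set (Fin n → ℤ)}
    (h : InSobolev 0 (S.indicator 1)) : S.Finite := by
  have hsmall := h.tendsto_cofinite_zero.eventually (gt_mem_nhds one_pos)
  refine (eventually_cofinite.1 hsmall).subset fun ξ hξ => ?_
  simp [hξ]

lemma GHr.finite_of_inSobolev_mul_indicator (h : GHr m r p) {S : Set (Fin n → ℤ)}
    (hS : InSobolev (r - m) fun ξ => p ξ * S.indicator 1 ξ) : S.Finite := by
  have hu := h (r - m) (S.indicator 1) (polyGrowth_of_norm_le (C := 1) fun ξ => ?_) hS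
  · exact finite_of_inSobolev_zero_indicator (by rwa [sub_add_cancel, sub_self] at hu)
  · by_cases hξ : ξ ∈ S <;> simp [hξ]

lemma GHr.finite_zeroSet (h : GHr m r p) : {ξ | p ξ = 0}.Finite := by
  refine h.finite_of_inSobolev_mul_indicator ?_
  unfold InSobolev
  convert (summable_zero : Summable fun _ : Fin n → ℤ => (0 : ℝ)) with ξ
  by_cases hξ : p ξ = 0 <;> simp [hξ]

lemma GHr.exists_lower_bound (h : GHr m r p) :
    ∃ K : ℝ, 0 < K ∧ ∀ ξ : Fin n → ℤ, ξ ≠ 0 → p ξ ≠ 0 →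
      K * l1norm ξ ^ (m - r) ≤ ‖p ξ‖ := by
  by_contra! hK
  obtain ⟨C, hC, hw⟩ := exists_weight_rpow_le_mul_l1norm_rpow_sq (n := n) (r - m)
  set q : (Fin n → ℤ) → ℝ := fun ξ => (1 + l2normSq ξ) ^ (r - m) * ‖p ξ‖ ^ 2
  have hpos : ∀ ξ ∈ {ξ | ξ ≠ 0 ∧ p ξ ≠ 0}, 0 < q ξ := fun ξ hξ => by
    have := one_le_l2normSq hξ.1
    have : p ξ ≠ 0 := hξ.2
    positivity
  have hsmall : ∀ ε > 0, ∃ ξ ∈ {ξ | ξ ≠ 0 ∧ p ξ ≠ 0}, q ξ < ε := fun ε hε => by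
    obtain ⟨ξ, hξ, hpξ, hlt⟩ := hK (√(ε / C)) (by positivity)
    refine ⟨ξ, ⟨hξ, hpξ⟩, ?_⟩
    have hl : 0 < l1norm ξ := l1norm_pos hξ
    have hinv : l1norm ξ ^ (r - m) * l1norm ξ ^ (m - r) = 1 := by
      rw [← Real.rpow_add hl, sub_add_sub_cancel, sub_self, Real.rpow_zero]
    calc q ξ ≤ C * (l1norm ξ ^ (r - m)) ^ 2 * ‖p ξ‖ ^ 2 :=
          mul_le_mul_of_nonneg_right (hw ξ hξ) (by positivity)
      _ < C * (l1norm ξ ^ (r - m)) ^ 2 * (√(ε / C) * l1norm ξ ^ (m - r)) ^ 2 := by gcongr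
      _ = ε := by
        rw [mul_pow, Real.sq_sqrt (by positivity), mul_mul_mul_comm, ← mul_pow, hinv]
        field_simp
  obtain ⟨S, hST, hSinf, hSsum⟩ :=
    exists_infinite_summable_indicator_of_forall_exists_lt hpos hsmall
  refine hSinf (h.finite_of_inSobolev_mul_indicator ?_)
  unfold InSobolev
  convert hSsum with ξ
  by_cases hξ : ξ ∈ S <;> simp [hξ, q]

lemma GHr.of_lower_bound (hZ : {ξ | p ξ = 0}.Finite) {K : ℝ} (hK : 0 < K)
    (hbd : ∀ ξ : Fin n → ℤ, ξ ≠ 0 → p ξ ≠ 0 →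
      K * l1norm ξ ^ (m - r) ≤ ‖p ξ‖) :
    GHr m r p := by
  intro k u _ hpu
  obtain ⟨C, hC, hw⟩ := exists_weight_rpow_le_mul_l1norm_rpow_sq (n := n) (m - r)
  refine Summable.of_norm_bounded_eventually (hpu.mul_left (C / K ^ 2)) ?_
  filter_upwards [(hZ.union (finite_singleton 0)).compl_mem_cofinite] with ξ hξ
  simp only [mem_compl_iff, mem_union, mem_singleton_iff, not_or] at hξ
  have hw_pos : 0 < 1 + l2normSq ξ := by linarith [l2normSq_nonneg ξ]
  have hsymb : (1 + l2normSq ξ) ^ (m - r) ≤ C / K ^ 2 * ‖p ξ‖ ^ 2 := by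
    have hKl := mul_pos hK (Real.rpow_pos_of_pos (l1norm_pos hξ.2) (m - r))
    have hpow := pow_le_pow_left₀ hKl.le (hbd ξ hξ.2 hξ.1) 2
    rw [div_mul_eq_mul_div, le_div_iff₀ (by positivity)]
    nlinarith [hw ξ hξ.2]
  rw [Real.norm_of_nonneg (by positivity), add_sub_assoc, Real.rpow_add hw_pos, norm_mul, mul_pow]
  calc (1 + l2normSq ξ) ^ k * (1 + l2normSq ξ) ^ (m - r) * ‖u ξ‖ ^ 2
      ≤ (1 + l2normSq ξ) ^ k * (C / K ^ 2 * ‖p ξ‖ ^ 2) * ‖u ξ‖ ^ 2 := by gcongr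
    _ = C / K ^ 2 * ((1 + l2normSq ξ) ^ k * (‖p ξ‖ ^ 2 * ‖u ξ‖ ^ 2)) := by ring

end Hypoellipticity

theorem stmt_0_general {n : ℕ} (m r : ℝ)
    (p : (Fin n → ℤ) → ℂ) :
    GHr m r p ↔
      ({ξ : Fin n → ℤ | p ξ = 0}.Finite ∧
        ∃ K : ℝ, 0 < K ∧ ∀ ξ : Fin n → ℤ, ξ ≠ 0 → p ξ ≠ 0 →
          K * l1norm ξ ^ (m - r) ≤ ‖p ξ‖) :=
  ⟨fun h => ⟨h.finite_zeroSet, h.exists_lower_bound⟩,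
    fun ⟨hZ, _, hK, hbd⟩ => GHr.of_lower_bound hZ hK hbd⟩

theorem stmt_0 {n : ℕ} (hn : 1 ≤ n) (m r : ℝ) (hr : 0 ≤ r)
    (p : (Fin n → ℤ) → ℂ) (hp : SymbolOrder m p) :
    GHr m r p ↔
      ({ξ : Fin n → ℤ | p ξ = 0}.Finite ∧
        ∃ K : ℝ, 0 < K ∧ ∀ ξ : Fin n → ℤ, ξ ≠ 0 → p ξ ≠ 0 →
          K * l1norm ξ ^ (m - r) ≤ ‖p ξ‖) :=
  stmt_0_general m r p
end

section
/- Let n ≥ 1, m ∈ ℝ, r ≥ 0, and let p : ℤⁿ → ℂ be a symbol of order m. Then p(D) is GS-r if and only if there exists a single fixed k ∈ ℝ such that for every f ∈ H^k(𝕋ⁿ) with f(ξ) = 0 whenever p(ξ) = 0, there exists u ∈ H^{k+m−r}(𝕋ⁿ) with p(ξ)u(ξ) = f(ξ) for all ξ ∈ ℤⁿ. -/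
open scoped BigOperators

/-! Conjugating by the Bessel potential `⟨D⟩^s`, an isomorphism `H^k → H^{k-s}` that commutes
with `p(D)`, moves solvability from one Sobolev index to any other. -/

/-- The Fourier multiplier of `⟨D⟩^s = (1 - Δ)^{s/2}`. -/
noncomputable def besselWeight {n : ℕ} (s : ℝ) (ξ : Fin n → ℤ) : ℝ :=
  (1 + l2normSq ξ) ^ (s / 2)

def SolvableAt {n : ℕ} (m r : ℝ) (p : (Fin n → ℤ) → ℂ) (k : ℝ) : Prop :=
  ∀ f : (Fin n → ℤ) → ℂ, InSobolev k f → (∀ ξ, p ξ = 0 → f ξ = 0) →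
    ∃ u : (Fin n → ℤ) → ℂ, InSobolev (k + m - r) u ∧ ∀ ξ, p ξ * u ξ = f ξ

section

variable {n : ℕ}

lemma one_add_l2normSq_pos (ξ : Fin n → ℤ) : 0 < 1 + l2normSq ξ := by
  have : 0 ≤ l2normSq ξ := Finset.sum_nonneg fun j _ => sq_nonneg _
  linarith

lemma besselWeight_neg_mul_besselWeight (s : ℝ) (ξ : Fin n → ℤ) :
    besselWeight (-s) ξ * besselWeight s ξ = 1 := by
  rw [besselWeight, besselWeight, ← Real.rpow_add (one_add_l2normSq_pos ξ), neg_div,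
    neg_add_cancel, Real.rpow_zero]

lemma InSobolev.besselWeight_mul {k : ℝ} (s : ℝ) {f : (Fin n → ℤ) → ℂ} (hf : InSobolev k f) :
    InSobolev (k - s) fun ξ => (besselWeight s ξ : ℂ) * f ξ := by
  refine (summable_congr fun ξ => ?_).mpr hf
  have hw := one_add_l2normSq_pos ξ
  rw [norm_mul, Complex.norm_real, besselWeight, Real.norm_of_nonneg (Real.rpow_nonneg hw.le _),
    mul_pow, ← Real.rpow_mul_natCast hw.le, ← mul_assoc, ← Real.rpow_add hw]
  congr 2
  push_cast
  ring

lemma solvableAt_of_solvableAt {m r : ℝ} {p : (Fin n → ℤ) → ℂ} {k₀ : ℝ}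
    (h : SolvableAt m r p k₀) (k : ℝ) : SolvableAt m r p k := by
  intro f hf hvanish
  have hg : InSobolev k₀ fun ξ => (besselWeight (k - k₀) ξ : ℂ) * f ξ := by
    simpa using hf.besselWeight_mul (k - k₀)
  obtain ⟨v, hv, hpv⟩ := h _ hg fun ξ hξ => by simp [hvanish ξ hξ]
  refine ⟨fun ξ => (besselWeight (k₀ - k) ξ : ℂ) * v ξ, ?_, fun ξ => ?_⟩
  · convert hv.besselWeight_mul (k₀ - k) using 1
    ring
  · have hinv : (besselWeight (k₀ - k) ξ : ℂ) * besselWeight (k - k₀) ξ = 1 := by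
      rw [← neg_sub, ← Complex.ofReal_mul, besselWeight_neg_mul_besselWeight,
        Complex.ofReal_one]
    calc p ξ * ((besselWeight (k₀ - k) ξ : ℂ) * v ξ)
        = (besselWeight (k₀ - k) ξ : ℂ) * (p ξ * v ξ) := by ring
      _ = f ξ := by rw [hpv, ← mul_assoc, hinv, one_mul]

end

theorem stmt_11_general {n : ℕ} (m r : ℝ)
    (p : (Fin n → ℤ) → ℂ) :
    GSr m r p ↔
      ∃ k : ℝ, ∀ f : (Fin n → ℤ) → ℂ, InSobolev k f →
        (∀ ξ, p ξ = 0 → f ξ = 0) →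
        ∃ u : (Fin n → ℤ) → ℂ, InSobolev (k + m - r) u ∧ ∀ ξ, p ξ * u ξ = f ξ :=
  show (∀ k, SolvableAt m r p k) ↔ ∃ k, SolvableAt m r p k from
    ⟨fun h => ⟨0, h 0⟩, fun ⟨_, h⟩ => solvableAt_of_solvableAt h⟩

theorem stmt_11 {n : ℕ} (hn : 1 ≤ n) (m r : ℝ) (hr : 0 ≤ r)
    (p : (Fin n → ℤ) → ℂ) (hp : SymbolOrder m p) :
    GSr m r p ↔
      ∃ k : ℝ, ∀ f : (Fin n → ℤ) → ℂ, InSobolev k f →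
        (∀ ξ, p ξ = 0 → f ξ = 0) →
        ∃ u : (Fin n → ℤ) → ℂ, InSobolev (k + m - r) u ∧ ∀ ξ, p ξ * u ξ = f ξ :=
  stmt_11_general m r p
end

section
/- Let α be an irrational real number whose irrationality measure μ(α) is finite, where μ(α) is the infimum of all μ > 0 such that the set of rational numbers q with 0 < |α − q| < 1/(den q)^μ is finite (den q denoting the denominator of q in lowest terms). Then: (a) for every real r > μ(α) there exists K > 0 such that |ξ₁ − α·ξ₂| ≥ K·(|ξ₁| + |ξ₂|)^(1−r) for all (ξ₁, ξ₂) ∈ ℤ² \ {(0,0)}; and (b) for every real r with 0 ≤ r < μ(α), no such constant K exists. (In the paper's terminology: the global hypoellipticity index of the vector field ∂_{x₁} − α∂_{x₂} on 𝕋² equals μ(α).) -/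
/-
Evaluating the symbol at `(q.num, q.den)`, and conversely writing `ξ₁ / ξ₂` in lowest terms
(whose denominator is at most `|ξ₂|`), shows that for `r ≥ 1` the bound
`|ξ₁ - α ξ₂| ≥ K (|ξ₁| + |ξ₂|)^(1-r)` is equivalent to a uniform Diophantine bound
`|α - q| ≥ K' / (den q)^r` on all rationals `q`. Such a bound at exponent `r` leaves only
finitely many `q` with `|α - q| < 1 / (den q)^s` for `s > r`, since those have bounded
denominator; conversely, if that set is finite at exponent `s`, its finitely many elements are
absorbed into the constant, giving the uniform bound at `s`. Dirichlet's theorem gives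
`μ(α) ≥ 2`, so the restriction `r ≥ 1` is harmless above `μ(α)`.
-/

open Real

def ratApproxSet (α s : ℝ) : Set ℚ :=
  {q : ℚ | 0 < |α - (q : ℝ)| ∧ |α - (q : ℝ)| < 1 / (q.den : ℝ) ^ s}

def IsDiophantine (α s : ℝ) : Prop :=
  ∃ K : ℝ, 0 < K ∧ ∀ q : ℚ, K / (q.den : ℝ) ^ s ≤ |α - (q : ℝ)|

/-- Global hypoellipticity of order `r` of `∂_{x₁} - α ∂_{x₂}`, in its symbol form. -/
def HasSymbolLowerBound (α r : ℝ) : Prop :=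
  ∃ K : ℝ, 0 < K ∧ ∀ ξ₁ ξ₂ : ℤ, ¬(ξ₁ = 0 ∧ ξ₂ = 0) →
    K * ((|ξ₁| + |ξ₂| : ℤ) : ℝ) ^ ((1 : ℝ) - r) ≤ |(ξ₁ : ℝ) - α * (ξ₂ : ℝ)|

lemma Int.one_le_abs_add_abs {a b : ℤ} (h : ¬(a = 0 ∧ b = 0)) : 1 ≤ |a| + |b| := by
  rcases not_and_or.1 h with ha | hb
  · linarith [Int.one_le_abs ha, abs_nonneg b]
  · linarith [Int.one_le_abs hb, abs_nonneg a]

lemma Rat.den_rpow_pos (q : ℚ) (s : ℝ) : 0 < (q.den : ℝ) ^ s :=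
  rpow_pos_of_pos (by exact_mod_cast q.pos) s

lemma Rat.den_intCast_div_le_abs (a : ℤ) {b : ℤ} (hb : b ≠ 0) :
    (((a : ℚ) / b).den : ℤ) ≤ |b| := by
  rw [← Rat.divInt_eq_div]
  exact Int.le_of_dvd (abs_pos.2 hb) ((dvd_abs _ _).2 (Rat.den_dvd a b))

lemma Rat.finite_setOf_abs_le_of_den_le (C B : ℝ) :
    {q : ℚ | |(q : ℝ)| ≤ C ∧ (q.den : ℝ) ≤ B}.Finite := by
  refine (((Set.finite_Icc (-⌈C * B⌉) ⌈C * B⌉).prod (Set.finite_Icc 0 ⌈B⌉₊)).image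
    fun p : ℤ × ℕ => (p.1 : ℚ) / p.2).subset ?_
  rintro q ⟨hqC, hqB⟩
  have hC : 0 ≤ C := (abs_nonneg _).trans hqC
  have hnum : |(q.num : ℝ)| ≤ C * B := by
    rw [← Rat.num_div_den q, Rat.cast_div, abs_div] at hqC
    simp only [Rat.cast_intCast, Rat.cast_natCast, Nat.abs_cast] at hqC
    rw [div_le_iff₀ (by exact_mod_cast q.pos)] at hqC
    exact hqC.trans (mul_le_mul_of_nonneg_left hqB hC)
  have hden : q.den ≤ ⌈B⌉₊ := by exact_mod_cast hqB.trans (Nat.le_ceil B)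
  refine ⟨(q.num, q.den), ⟨abs_le.1 ?_, Nat.zero_le _, hden⟩, Rat.num_div_den q⟩
  exact_mod_cast hnum.trans (Int.le_ceil _)

lemma exists_pos_le_of_finite_setOf_lt_one {ι : Type*} {f : ι → ℝ} (hf : ∀ i, 0 < f i)
    (hfin : {i | f i < 1}.Finite) : ∃ c, 0 < c ∧ ∀ i, c ≤ f i := by
  rcases Set.eq_empty_or_nonempty {i | f i < 1} with hE | hE
  · exact ⟨1, one_pos, fun i => not_lt.1 fun hi => hE.subset hi⟩
  · obtain ⟨i₀, -, hmin⟩ := Set.exists_min_image _ f hfin hE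
    refine ⟨min 1 (f i₀), lt_min one_pos (hf i₀), fun i => ?_⟩
    by_cases hi : f i < 1
    · exact (min_le_right _ _).trans (hmin i hi)
    · exact (min_le_left _ _).trans (not_lt.1 hi)

lemma min_one_rpow_mul_rpow_le {b d C : ℝ} (t : ℝ) (hd : 0 < d) (hdb : d ≤ b)
    (hbC : b ≤ C * d) : min 1 (C ^ t) * d ^ t ≤ b ^ t := by
  have hC : 0 ≤ C := nonneg_of_mul_nonneg_left (hd.le.trans (hdb.trans hbC)) hd
  rcases le_or_gt 0 t with ht | ht
  · calc min 1 (C ^ t) * d ^ t ≤ 1 * d ^ t := by gcongr; exact min_le_left _ _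
      _ ≤ b ^ t := by rw [one_mul]; gcongr
  · calc min 1 (C ^ t) * d ^ t ≤ C ^ t * d ^ t := by gcongr; exact min_le_right _ _
      _ = (C * d) ^ t := (mul_rpow hC hd.le).symm
      _ ≤ b ^ t := rpow_le_rpow_of_nonpos (hd.trans_le hdb) hbC ht.le

lemma abs_intCast_sub_mul_eq {α : ℝ} {a b : ℤ} (hb : b ≠ 0) :
    |(a : ℝ) - α * b| = |(b : ℝ)| * |α - (((a : ℚ) / b : ℚ) : ℝ)| := by
  rw [← abs_mul, abs_sub_comm]
  push_cast
  field_simp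

lemma abs_num_sub_mul_den (α : ℝ) (q : ℚ) :
    |(q.num : ℝ) - α * ((q.den : ℤ) : ℝ)| = q.den * |α - (q : ℝ)| := by
  have hd : (0 : ℝ) < q.den := by exact_mod_cast q.pos
  rw [← abs_of_pos hd, ← abs_mul, abs_sub_comm]
  congr 1
  rw [Rat.cast_def]
  push_cast
  field_simp

lemma Rat.abs_num_add_den_le {α : ℝ} {q : ℚ} (hq : |α - (q : ℝ)| < 1) :
    |(q.num : ℝ)| + q.den ≤ (|α| + 2) * q.den := by
  have hqα : |(q : ℝ)| ≤ |α| + 1 := by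
    linarith [abs_sub_abs_le_abs_sub (q : ℝ) α, abs_sub_comm (q : ℝ) α]
  have hnum : (q.num : ℝ) = q * q.den := by rw [Rat.cast_def]; field_simp
  rw [hnum, abs_mul, Nat.abs_cast]
  nlinarith [q.den.cast_nonneg (α := ℝ)]

lemma Irrational.two_le_of_finite_ratApproxSet {α s : ℝ} (hα : Irrational α)
    (h : (ratApproxSet α s).Finite) : 2 ≤ s := by
  by_contra! hs
  refine Real.infinite_rat_abs_sub_lt_one_div_den_sq_of_irrational hα (h.subset fun q hq => ?_)
  refine ⟨abs_pos.2 (sub_ne_zero.2 (hα.ne_rat q)), hq.trans_le ?_⟩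
  rw [← rpow_natCast]
  gcongr
  · exact_mod_cast q.pos
  · exact_mod_cast hs.le

lemma Irrational.isDiophantine_of_finite {α s : ℝ} (hα : Irrational α)
    (h : (ratApproxSet α s).Finite) : IsDiophantine α s := by
  have hpos (q : ℚ) : 0 < |α - (q : ℝ)| := abs_pos.2 (sub_ne_zero.2 (hα.ne_rat q))
  obtain ⟨K, hK, hKle⟩ := exists_pos_le_of_finite_setOf_lt_one
    (f := fun q : ℚ => |α - (q : ℝ)| * (q.den : ℝ) ^ s)
    (fun q => mul_pos (hpos q) (q.den_rpow_pos s)) <| h.subset fun q hq =>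
      ⟨hpos q, by rwa [lt_div_iff₀ (q.den_rpow_pos s)]⟩
  exact ⟨K, hK, fun q => (div_le_iff₀ (q.den_rpow_pos s)).2 (hKle q)⟩

lemma IsDiophantine.finite_ratApproxSet {α r s : ℝ} (h : IsDiophantine α r) (hrs : r < s)
    (hs : 0 ≤ s) : (ratApproxSet α s).Finite := by
  obtain ⟨K, hK, hKle⟩ := h
  refine (Rat.finite_setOf_abs_le_of_den_le (|α| + 1) (K⁻¹ ^ (s - r)⁻¹)).subset ?_
  rintro q ⟨-, hq⟩
  have hd : (1 : ℝ) ≤ q.den := by exact_mod_cast q.pos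
  have hq1 : |α - (q : ℝ)| < 1 :=
    hq.trans_le (div_le_one_of_le₀ (one_le_rpow hd hs) (rpow_nonneg (by linarith) s))
  refine ⟨?_, ?_⟩
  · linarith [abs_sub_abs_le_abs_sub (q : ℝ) α, abs_sub_comm (q : ℝ) α]
  · have hKs : K * (q.den : ℝ) ^ s < (q.den : ℝ) ^ r := by
      have := (hKle q).trans_lt hq
      rwa [div_lt_div_iff₀ (q.den_rpow_pos r) (q.den_rpow_pos s), one_mul] at this
    rw [le_rpow_inv_iff_of_pos (by linarith) (by positivity) (sub_pos.2 hrs),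
      rpow_sub (by linarith), div_le_iff₀ (q.den_rpow_pos r), ← div_eq_inv_mul, le_div_iff₀' hK]
    exact hKs.le

lemma HasSymbolLowerBound.mono {α r s : ℝ} (h : HasSymbolLowerBound α s) (hsr : s ≤ r) :
    HasSymbolLowerBound α r := by
  obtain ⟨K, hK, hbound⟩ := h
  refine ⟨K, hK, fun ξ₁ ξ₂ hξ => le_trans ?_ (hbound ξ₁ ξ₂ hξ)⟩
  gcongr
  exact_mod_cast Int.one_le_abs_add_abs hξ

lemma IsDiophantine.hasSymbolLowerBound {α s : ℝ} (h : IsDiophantine α s) (hs : 1 ≤ s) :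
    HasSymbolLowerBound α s := by
  obtain ⟨K, hK, hKle⟩ := h
  refine ⟨min K 1, lt_min hK one_pos, fun ξ₁ ξ₂ hξ => ?_⟩
  have hN : (1 : ℝ) ≤ ((|ξ₁| + |ξ₂| : ℤ) : ℝ) := by exact_mod_cast Int.one_le_abs_add_abs hξ
  rcases eq_or_ne ξ₂ 0 with rfl | hξ₂
  · have hξ₁ : (1 : ℝ) ≤ |(ξ₁ : ℝ)| := by exact_mod_cast Int.one_le_abs fun h => hξ ⟨h, rfl⟩
    calc min K 1 * ((|ξ₁| + |(0 : ℤ)| : ℤ) : ℝ) ^ ((1 : ℝ) - s) ≤ 1 * 1 :=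
          mul_le_mul (min_le_right _ _) (rpow_le_one_of_one_le_of_nonpos hN (by linarith))
            (by positivity) zero_le_one
      _ ≤ |(ξ₁ : ℝ) - α * ((0 : ℤ) : ℝ)| := by simpa using hξ₁
  · set q : ℚ := (ξ₁ : ℚ) / ξ₂
    have hb : (0 : ℝ) < |(ξ₂ : ℝ)| := by positivity
    have hden : (q.den : ℝ) ≤ |(ξ₂ : ℝ)| := by
      have := Int.cast_le (R := ℝ) |>.2 (Rat.den_intCast_div_le_abs ξ₁ hξ₂)
      rwa [Int.cast_abs, Int.cast_natCast] at this
    calc min K 1 * ((|ξ₁| + |ξ₂| : ℤ) : ℝ) ^ ((1 : ℝ) - s)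
        ≤ K * |(ξ₂ : ℝ)| ^ ((1 : ℝ) - s) := by
          gcongr ?_ * ?_
          · exact min_le_left _ _
          · exact rpow_le_rpow_of_nonpos hb (by push_cast; linarith [abs_nonneg (ξ₁ : ℝ)])
              (by linarith)
      _ = |(ξ₂ : ℝ)| * (K / |(ξ₂ : ℝ)| ^ s) := by
          rw [rpow_sub hb, rpow_one]; ring
      _ ≤ |(ξ₂ : ℝ)| * (K / (q.den : ℝ) ^ s) := by
          gcongr
      _ ≤ |(ξ₂ : ℝ)| * |α - (q : ℝ)| := by gcongr; exact hKle q
      _ = |(ξ₁ : ℝ) - α * ξ₂| := (abs_intCast_sub_mul_eq hξ₂).symm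

lemma HasSymbolLowerBound.isDiophantine {α r : ℝ} (h : HasSymbolLowerBound α r) (hr : 0 ≤ r) :
    IsDiophantine α r := by
  obtain ⟨K, hK, hbound⟩ := h
  set c := min 1 ((|α| + 2) ^ (1 - r))
  have hc : 0 < c := lt_min one_pos (by positivity)
  refine ⟨min 1 (K * c), lt_min one_pos (by positivity), fun q => ?_⟩
  have hd : (1 : ℝ) ≤ q.den := by exact_mod_cast q.pos
  have hdr : 0 < (q.den : ℝ) ^ r := rpow_pos_of_pos (by linarith) r
  rcases le_or_gt 1 |α - (q : ℝ)| with hq | hq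
  · calc min 1 (K * c) / (q.den : ℝ) ^ r ≤ 1 := by
          rw [div_le_one hdr]
          exact (min_le_left _ _).trans (one_le_rpow hd hr)
      _ ≤ |α - (q : ℝ)| := hq
  · have hsum : (|q.num| + |(q.den : ℤ)| : ℤ) = |(q.num : ℝ)| + q.den := by
      push_cast
      rw [Nat.abs_cast]
    have hd0 : (0 : ℝ) < q.den := by linarith
    have hsymbol := hbound q.num q.den (fun h => q.pos.ne' (by exact_mod_cast h.2))
    rw [abs_num_sub_mul_den, hsum] at hsymbol
    calc min 1 (K * c) / (q.den : ℝ) ^ r ≤ K * c / (q.den : ℝ) ^ r := by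
          gcongr; exact min_le_right _ _
      _ = K * (c * (q.den : ℝ) ^ (1 - r)) / q.den := by
          rw [rpow_sub hd0, rpow_one]; field_simp
      _ ≤ K * (|(q.num : ℝ)| + q.den) ^ (1 - r) / q.den := by
          gcongr
          exact min_one_rpow_mul_rpow_le _ hd0 (le_add_of_nonneg_left (abs_nonneg _))
            (Rat.abs_num_add_den_le hq)
      _ ≤ |α - (q : ℝ)| := by
          rw [div_le_iff₀ hd0, mul_comm _ (q.den : ℝ)]
          exact hsymbol

/-- The global hypoellipticity index of `∂_{x₁} - α ∂_{x₂}` on `𝕋²` equals the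
irrationality measure `μ(α)` of the irrational number `α` (assumed finite). -/
theorem stmt_14 (α : ℝ) (hα : Irrational α) (μ : ℝ)
    (hμ : IsGLB {s : ℝ | 0 < s ∧
      {q : ℚ | 0 < |α - (q : ℝ)| ∧ |α - (q : ℝ)| < 1 / (q.den : ℝ) ^ s}.Finite} μ) :
    (∀ r : ℝ, μ < r → ∃ K : ℝ, 0 < K ∧ ∀ ξ₁ ξ₂ : ℤ, ¬(ξ₁ = 0 ∧ ξ₂ = 0) →
        K * ((|ξ₁| + |ξ₂| : ℤ) : ℝ) ^ ((1 : ℝ) - r) ≤ |(ξ₁ : ℝ) - α * (ξ₂ : ℝ)|) ∧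
    (∀ r : ℝ, 0 ≤ r → r < μ → ¬∃ K : ℝ, 0 < K ∧ ∀ ξ₁ ξ₂ : ℤ, ¬(ξ₁ = 0 ∧ ξ₂ = 0) →
        K * ((|ξ₁| + |ξ₂| : ℤ) : ℝ) ^ ((1 : ℝ) - r) ≤ |(ξ₁ : ℝ) - α * (ξ₂ : ℝ)|) := by
  change IsGLB {s : ℝ | 0 < s ∧ (ratApproxSet α s).Finite} μ at hμ
  refine ⟨fun r hr => ?_, fun r hr hrμ hbound => ?_⟩
  · obtain ⟨s, ⟨-, hs⟩, -, hsr⟩ := hμ.exists_between hr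
    have h2s : 2 ≤ s := hα.two_le_of_finite_ratApproxSet hs
    exact ((hα.isDiophantine_of_finite hs).hasSymbolLowerBound (by linarith)).mono hsr.le
  · have hdio : IsDiophantine α r := HasSymbolLowerBound.isDiophantine hbound hr
    refine hrμ.not_ge (le_of_forall_gt_imp_ge_of_dense fun s hrs => hμ.1 ?_)
    exact ⟨hr.trans_lt hrs, hdio.finite_ratApproxSet hrs (by linarith)⟩
end
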